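/- In ℤ² with 4-adjacency, if a finite connected set P of cells does not contain cell c but the set P ∪ {c} is such that in the final full shape c is attached to P only via its north and south neighbors (both in P) while its east and west neighbors are not in P, then P ∪ {c} has a hole or P is disconnected; contrapositive: if P is connected and P ∪ {c} has no hole, and at least two of c's four neighbors are in P, then two adjacent (perpendicular) neighbors of c are in P. -/

import Mathlib

/-- 4-adjacency on `ℤ²`. -/
def adj (p q : ℤ × ℤ) : Prop := |p.1 - q.1| + |p.2 - q.2| = 1

/-- A set of cells is connected if any two of its cells are joined by a path of
adjacent cells staying inside the set. -/
def ConnectedIn (S : Set (ℤ × ℤ)) : Prop :=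
  ∀ p ∈ S, ∀ q ∈ S,
    Relation.ReflTransGen (fun a b => adj a b ∧ a ∈ S ∧ b ∈ S) p q

/-- A set has a hole if its complement has a bounded connected component. -/
def HasHole (S : Set (ℤ × ℤ)) : Prop :=
  ∃ x ∉ S, ∃ B : ℤ, ∀ q : ℤ × ℤ,
    Relation.ReflTransGen (fun a b => adj a b ∧ a ∉ S ∧ b ∉ S) x q →
      |q.1| ≤ B ∧ |q.2| ≤ B

/-! A path in `P` from the north to the south neighbour of `c`, closed up through `c`, is a lattice
loop in `P ∪ {c}`. Its winding number around the corner `(q.1 + ½, q.2 + ½)`, counted as signed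
crossings of the horizontal ray to the right, does not change when `q` moves to an adjacent cell
outside the loop, and vanishes for `q` far away. Only the step from `c` to its north neighbour
passes between the corners attached to the west and east neighbours of `c`, so the two winding
numbers differ by one; the neighbour with nonzero winding number lies in a bounded component of
the complement. -/

open Finset

lemma adj_iff_eq_or_eq {a b : ℤ × ℤ} :
    adj a b ↔ b = (a.1 + 1, a.2) ∨ a = (b.1 + 1, b.2) ∨ b = (a.1, a.2 + 1) ∨
      a = (b.1, b.2 + 1) := by
  obtain ⟨a1, a2⟩ := a
  obtain ⟨b1, b2⟩ := b
  simp only [adj, Prod.mk.injEq, abs_eq_max_neg]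
  omega

/-- The signed number of times the lattice step `a → b` crosses the horizontal ray from the
corner `(q.1 + ½, q.2 + ½)` to the right; horizontal steps contribute `0`. -/
def crossing (q a b : ℤ × ℤ) : ℤ :=
  if q.1 < a.1 then (if q.2 < b.2 then 1 else 0) - (if q.2 < a.2 then 1 else 0) else 0

lemma crossing_eq_crossing_right {q a b : ℤ × ℤ} (hab : adj a b)
    (ha : a ≠ (q.1 + 1, q.2)) (hb : b ≠ (q.1 + 1, q.2)) :
    crossing q a b = crossing (q.1 + 1, q.2) a b := by
  obtain ⟨q1, q2⟩ := q
  obtain ⟨a1, a2⟩ := a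
  obtain ⟨b1, b2⟩ := b
  simp only [adj, crossing, abs_eq_max_neg, ne_eq, Prod.mk.injEq] at *
  split_ifs <;> omega

lemma crossing_sub_crossing_up {q a b : ℤ × ℤ} (hab : adj a b)
    (ha : a ≠ (q.1, q.2 + 1)) (hb : b ≠ (q.1, q.2 + 1)) :
    crossing q a b - crossing (q.1, q.2 + 1) a b =
      (if b.2 = q.2 + 1 ∧ q.1 < b.1 then 1 else 0) -
        (if a.2 = q.2 + 1 ∧ q.1 < a.1 then 1 else 0) := by
  obtain ⟨q1, q2⟩ := q
  obtain ⟨a1, a2⟩ := a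
  obtain ⟨b1, b2⟩ := b
  simp only [adj, crossing, abs_eq_max_neg, ne_eq, Prod.mk.injEq] at *
  split_ifs <;> omega

def winding (γ : ℕ → ℤ × ℤ) (n : ℕ) (q : ℤ × ℤ) : ℤ :=
  ∑ i ∈ range n, crossing q (γ i) (γ (i + 1))

section Loop

variable {γ : ℕ → ℤ × ℤ} {n : ℕ}

lemma winding_eq_winding_right (hadj : ∀ i < n, adj (γ i) (γ (i + 1))) {q : ℤ × ℤ}
    (hq : ∀ i ≤ n, γ i ≠ (q.1 + 1, q.2)) : winding γ n q = winding γ n (q.1 + 1, q.2) :=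
  sum_congr rfl fun i hi => by
    have hi := mem_range.mp hi
    exact crossing_eq_crossing_right (hadj i hi) (hq i hi.le) (hq (i + 1) hi)

lemma winding_west_eq_winding_east (hadj : ∀ i < n, adj (γ i) (γ (i + 1))) {q : ℤ × ℤ}
    (hq : ∀ i ≤ n, γ i ≠ q) (hq' : ∀ i ≤ n, γ i ≠ (q.1 + 1, q.2)) :
    winding γ n (q.1 - 1, q.2) = winding γ n (q.1 + 1, q.2) := by
  have hwest := winding_eq_winding_right hadj (q := (q.1 - 1, q.2)) (by simpa using hq)
  rw [hwest, sub_add_cancel]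
  exact winding_eq_winding_right hadj hq'

lemma winding_eq_winding_up (hadj : ∀ i < n, adj (γ i) (γ (i + 1))) (hclosed : γ n = γ 0)
    {q : ℤ × ℤ} (hq : ∀ i ≤ n, γ i ≠ (q.1, q.2 + 1)) :
    winding γ n q = winding γ n (q.1, q.2 + 1) := by
  let g : ℕ → ℤ := fun i => if (γ i).2 = q.2 + 1 ∧ q.1 < (γ i).1 then 1 else 0
  rw [← sub_eq_zero, winding, winding, ← sum_sub_distrib]
  calc ∑ i ∈ range n, (crossing q (γ i) (γ (i + 1)) - crossing (q.1, q.2 + 1) (γ i) (γ (i + 1)))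
      = ∑ i ∈ range n, (g (i + 1) - g i) := sum_congr rfl fun i hi => by
        have hi := mem_range.mp hi
        exact crossing_sub_crossing_up (hadj i hi) (hq i hi.le) (hq (i + 1) hi)
    _ = 0 := by rw [sum_range_sub, sub_eq_zero]; simp only [g, hclosed]

lemma winding_eq_of_adj (hadj : ∀ i < n, adj (γ i) (γ (i + 1))) (hclosed : γ n = γ 0)
    {a b : ℤ × ℤ} (hab : adj a b) (ha : ∀ i ≤ n, γ i ≠ a) (hb : ∀ i ≤ n, γ i ≠ b) :
    winding γ n a = winding γ n b := by
  rcases adj_iff_eq_or_eq.mp hab with rfl | rfl | rfl | rfl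
  · exact winding_eq_winding_right hadj hb
  · exact (winding_eq_winding_right hadj ha).symm
  · exact winding_eq_winding_up hadj hclosed hb
  · exact (winding_eq_winding_up hadj hclosed ha).symm

lemma winding_eq_of_reflTransGen (hadj : ∀ i < n, adj (γ i) (γ (i + 1))) (hclosed : γ n = γ 0)
    {S : Set (ℤ × ℤ)} (hS : ∀ i ≤ n, γ i ∈ S) {x y : ℤ × ℤ}
    (hxy : Relation.ReflTransGen (fun a b => adj a b ∧ a ∉ S ∧ b ∉ S) x y) :
    winding γ n x = winding γ n y := by
  induction hxy with
  | refl => rfl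
  | tail _ hbc ih =>
    obtain ⟨hadj_bc, hb, hc⟩ := hbc
    exact ih.trans <| winding_eq_of_adj hadj hclosed hadj_bc
      (fun i hi h => hb (h ▸ hS i hi)) (fun i hi h => hc (h ▸ hS i hi))

lemma abs_le_of_winding_ne_zero (hclosed : γ n = γ 0) {B : ℤ}
    (hB : ∀ i ≤ n, |(γ i).1| ≤ B ∧ |(γ i).2| ≤ B) {q : ℤ × ℤ} (hq : winding γ n q ≠ 0) :
    |q.1| ≤ B ∧ |q.2| ≤ B := by
  by_contra hout
  have hfar : q.1 < -B ∨ B ≤ q.1 ∨ q.2 < -B ∨ B ≤ q.2 := by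
    rw [abs_le, abs_le] at hout
    omega
  have hbd : ∀ i ≤ n, -B ≤ (γ i).1 ∧ (γ i).1 ≤ B ∧ -B ≤ (γ i).2 ∧ (γ i).2 ≤ B := fun i hi => by
    have := hB i hi
    rw [abs_le, abs_le] at this
    omega
  apply hq
  rcases hfar with hleft | hfar
  · let f : ℕ → ℤ := fun i => if q.2 < (γ i).2 then 1 else 0
    calc winding γ n q = ∑ i ∈ range n, (f (i + 1) - f i) :=
          sum_congr rfl fun i hi => if_pos (by linarith [(hbd i (mem_range.mp hi).le).1])
      _ = 0 := by rw [sum_range_sub, sub_eq_zero]; simp only [f, hclosed]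
  · refine sum_eq_zero fun i hi => ?_
    have ha := hbd i (mem_range.mp hi).le
    have hb := hbd (i + 1) (mem_range.mp hi)
    unfold crossing
    split_ifs <;> omega

lemma hasHole_of_winding_ne_zero (hadj : ∀ i < n, adj (γ i) (γ (i + 1))) (hclosed : γ n = γ 0)
    {S : Set (ℤ × ℤ)} (hS : ∀ i ≤ n, γ i ∈ S) {x : ℤ × ℤ} (hx : x ∉ S)
    (hw : winding γ n x ≠ 0) : HasHole S := by
  obtain ⟨B, hB⟩ := ((range (n + 1)).image fun i => max |(γ i).1| |(γ i).2|).exists_le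
  refine ⟨x, hx, B, fun q hq => abs_le_of_winding_ne_zero hclosed (fun i hi => ?_) ?_⟩
  · exact max_le_iff.mp (hB _ (mem_image_of_mem _ (mem_range.mpr (Nat.lt_succ_of_le hi))))
  · rwa [← winding_eq_of_reflTransGen hadj hclosed hS hq]

end Loop

lemma Relation.ReflTransGen.exists_path {α : Type*} {r : α → α → Prop} {a b : α}
    (h : Relation.ReflTransGen r a b) :
    ∃ (n : ℕ) (γ : ℕ → α), γ 0 = a ∧ γ n = b ∧ ∀ i < n, r (γ i) (γ (i + 1)) := by
  induction h with
  | refl => exact ⟨0, fun _ => a, rfl, rfl, by simp⟩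
  | @tail b c _ hbc ih =>
    obtain ⟨n, γ, h0, hn, hstep⟩ := ih
    refine ⟨n + 1, fun i => if i ≤ n then γ i else c, by simpa using h0, by simp, fun i hi => ?_⟩
    rcases Nat.lt_succ_iff_lt_or_eq.mp hi with hi | rfl
    · simpa [hi.le, Nat.succ_le_of_lt hi] using hstep i hi
    · simpa [hn] using hbc

section Close

variable {α : Type*}

def closeThrough (γ : ℕ → α) (m : ℕ) (c : α) (i : ℕ) : α :=
  if i ≤ m then γ i else if i = m + 1 then c else γ 0

variable {γ : ℕ → α} {m : ℕ} {c : α}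

lemma closeThrough_closed : closeThrough γ m c (m + 2) = closeThrough γ m c 0 := by
  simp [closeThrough]

lemma closeThrough_mem {S : Set α} (hγ : ∀ i ≤ m, γ i ∈ S) (hc : c ∈ S) (i : ℕ) :
    closeThrough γ m c i ∈ S := by
  unfold closeThrough
  split_ifs with h
  exacts [hγ i h, hc, hγ 0 m.zero_le]

lemma closeThrough_step {r : α → α → Prop} (hγ : ∀ i < m, r (γ i) (γ (i + 1)))
    (hlast : r (γ m) c) (hfirst : r c (γ 0)) :
    ∀ i < m + 2, r (closeThrough γ m c i) (closeThrough γ m c (i + 1)) := by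
  intro i hi
  rcases lt_trichotomy i m with h | rfl | h
  · simpa [closeThrough, h.le, Nat.succ_le_of_lt h] using hγ i h
  · simpa [closeThrough] using hlast
  · obtain rfl : i = m + 1 := by omega
    simpa [closeThrough] using hfirst

end Close

lemma winding_closeThrough (γ : ℕ → ℤ × ℤ) (m : ℕ) (c q : ℤ × ℤ) :
    winding (closeThrough γ m c) (m + 2) q =
      winding γ m q + crossing q (γ m) c + crossing q c (γ 0) := by
  have hm : closeThrough γ m c m = γ m := if_pos le_rfl
  have hm1 : closeThrough γ m c (m + 1) = c := by simp [closeThrough]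
  have hm2 : closeThrough γ m c (m + 1 + 1) = γ 0 := by simp [closeThrough]
  rw [winding, sum_range_succ, sum_range_succ, hm, hm1, hm2]
  congr 2
  refine sum_congr rfl fun i hi => ?_
  have hi := mem_range.mp hi
  simp [closeThrough, hi.le, Nat.succ_le_of_lt hi]

theorem north_south_attachment_creates_hole_general (P : Set (ℤ × ℤ))
    (hconn : ConnectedIn P)
    (c : ℤ × ℤ) (hc : c ∉ P)
    (hnorth : (c.1, c.2 + 1) ∈ P) (hsouth : (c.1, c.2 - 1) ∈ P)
    (heast : (c.1 + 1, c.2) ∉ P) (hwest : (c.1 - 1, c.2) ∉ P) :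
    HasHole (P ∪ {c}) := by
  obtain ⟨m, γ, h0, hm, hstep⟩ := (hconn _ hnorth _ hsouth).exists_path
  have hγP : ∀ i ≤ m, γ i ∈ P := fun i hi => by
    rcases hi.lt_or_eq with hi | rfl
    exacts [(hstep i hi).2.1, hm ▸ hsouth]
  set δ := closeThrough γ m c
  have hδadj : ∀ i < m + 2, adj (δ i) (δ (i + 1)) :=
    closeThrough_step (fun i hi => (hstep i hi).1)
      (by rw [hm, adj_iff_eq_or_eq]; simp) (by rw [h0, adj_iff_eq_or_eq]; simp)
  have hδS : ∀ i ≤ m + 2, δ i ∈ P ∪ {c} := fun i _ =>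
    closeThrough_mem (S := P ∪ {c}) (fun i hi => Or.inl (hγP i hi)) (Or.inr rfl) i
  have hpath : winding γ m (c.1 - 1, c.2) = winding γ m (c.1 + 1, c.2) :=
    winding_west_eq_winding_east (fun i hi => (hstep i hi).1)
      (fun i hi h => hc (h ▸ hγP i hi)) (fun i hi h => heast (h ▸ hγP i hi))
  have hdiff : winding δ (m + 2) (c.1 - 1, c.2) = winding δ (m + 2) (c.1 + 1, c.2) + 1 := by
    rw [winding_closeThrough, winding_closeThrough, hm, h0, hpath]
    simp [crossing]
  have hout : ∀ q ∉ P, q ≠ c → q ∉ P ∪ {c} := fun q hq hqc h => h.elim hq hqc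
  by_cases heast0 : winding δ (m + 2) (c.1 + 1, c.2) = 0
  · exact hasHole_of_winding_ne_zero hδadj closeThrough_closed hδS
      (hout _ hwest (by simp [Prod.ext_iff])) (by omega)
  · exact hasHole_of_winding_ne_zero hδadj closeThrough_closed hδS
      (hout _ heast (by simp [Prod.ext_iff])) heast0

/-- If `P ⊆ ℤ²` is finite and connected, `c ∉ P`, the north and south neighbors
of `c` are in `P`, but the east and west neighbors are not, then `P ∪ {c}` has
a hole. -/
theorem north_south_attachment_creates_hole (P : Set (ℤ × ℤ))
    (hfin : P.Finite) (hconn : ConnectedIn P)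
    (c : ℤ × ℤ) (hc : c ∉ P)
    (hnorth : (c.1, c.2 + 1) ∈ P) (hsouth : (c.1, c.2 - 1) ∈ P)
    (heast : (c.1 + 1, c.2) ∉ P) (hwest : (c.1 - 1, c.2) ∉ P) :
    HasHole (P ∪ {c}) :=
  north_south_attachment_creates_hole_general P hconn c hc hnorth hsouth heast hwest
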